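/- Under the hypotheses of the previous statement, for i < j < k one has Q_i Q_j Q_k (x₁x₂x₃) = ∑_{σ∈S₃} sgn(σ) y_{σ(1)}^{ℓ^k} y_{σ(2)}^{ℓ^j} y_{σ(3)}^{ℓ^i}, and if y₁, y₂, y₃ generate a polynomial subalgebra (ℤ/ℓ)[y₁,y₂,y₃] ⊆ H, this element is nonzero. -/
import Mathlib


/-- Under the hypotheses of the previous statement, for i < j < k,
    Q_i Q_j Q_k (x₁x₂x₃) = ∑_{σ∈S₃} sgn(σ) y_{σ(1)}^{ℓ^k} y_{σ(2)}^{ℓ^j} y_{σ(3)}^{ℓ^i},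
    and if the y's generate a polynomial subalgebra (monomials in the y's are linearly
    independent), this element is nonzero. -/
theorem stmt4 (ℓ : ℕ) (hℓ : ℓ.Prime) (H : Type*) [Ring H] [Algebra (ZMod ℓ) H]
    (𝒜 : ℕ → AddSubgroup H) (Q : ℕ → H →+ H)
    (hLeib : ∀ (s : ℕ) (n : ℕ) (a b : H), a ∈ 𝒜 n →
      Q s (a * b) = Q s a * b + ((-1 : ℤ) ^ n) • (a * Q s b))
    (x y : Fin 3 → H)
    (hx : ∀ m, x m ∈ 𝒜 1) (hy : ∀ m, y m ∈ 𝒜 2)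
    (hanti : ∀ a b, x a * x b = - (x b * x a))
    (hycentral : ∀ m z, Commute (y m) z)
    (hQx : ∀ s m, Q s (x m) = y m ^ ℓ ^ s)
    (hQy : ∀ s m, Q s (y m) = 0)
    (hfree : ∀ (s : Finset (Fin 3 →₀ ℕ)) (c : (Fin 3 →₀ ℕ) → ZMod ℓ),
      (∑ d ∈ s, c d • (y 0 ^ d 0 * y 1 ^ d 1 * y 2 ^ d 2)) = 0 → ∀ d ∈ s, c d = 0)
    (i j k : ℕ) (hij : i < j) (hjk : j < k) :
    Q i (Q j (Q k (x 0 * x 1 * x 2))) =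
      (∑ σ : Equiv.Perm (Fin 3), (Equiv.Perm.sign σ : ℤ) •
        (y (σ 0) ^ ℓ ^ k * y (σ 1) ^ ℓ ^ j * y (σ 2) ^ ℓ ^ i)) ∧
    Q i (Q j (Q k (x 0 * x 1 * x 2))) ≠ 0 := by
  have L0 : ∀ s m (z : H), Q s (y m * z) = y m * Q s z := by
    intro s m z
    rw [hLeib s 2 (y m) z (hy m), hQy]
    simp
  have L1 : ∀ s m e (z : H), Q s (y m ^ e * z) = y m ^ e * Q s z := by
    intro s m e
    induction e with
    | zero => simp
    | succ n ih =>
      intro z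
      rw [pow_succ', mul_assoc, L0, ih, mul_assoc]
  have Qyp : ∀ s t m, Q s (y m ^ ℓ ^ t) = 0 := by
    intro s t m
    obtain ⟨e, he⟩ : ∃ e, ℓ ^ t = e + 1 :=
      ⟨ℓ ^ t - 1, (Nat.succ_pred_eq_of_pos (pow_pos hℓ.pos t)).symm⟩
    rw [he, pow_succ, L1, hQy, mul_zero]
  have Lx : ∀ s m (z : H), Q s (x m * z) = y m ^ ℓ ^ s * z - x m * Q s z := by
    intro s m z
    rw [hLeib s 1 (x m) z (hx m), hQx]
    simp [sub_eq_add_neg]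
  have hmain : Q i (Q j (Q k (x 0 * x 1 * x 2))) =
      y 0 ^ ℓ ^ k * (y 1 ^ ℓ ^ j * y 2 ^ ℓ ^ i) - y 0 ^ ℓ ^ k * (y 1 ^ ℓ ^ i * y 2 ^ ℓ ^ j)
      - y 0 ^ ℓ ^ j * (y 1 ^ ℓ ^ k * y 2 ^ ℓ ^ i) + y 0 ^ ℓ ^ i * (y 1 ^ ℓ ^ k * y 2 ^ ℓ ^ j)
      + y 0 ^ ℓ ^ j * (y 1 ^ ℓ ^ i * y 2 ^ ℓ ^ k) - y 0 ^ ℓ ^ i * (y 1 ^ ℓ ^ j * y 2 ^ ℓ ^ k) := by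
    rw [mul_assoc]
    simp only [Lx, L1, hQx, Qyp, map_sub, map_add, map_neg, mul_zero, sub_zero, zero_sub, mul_one]
    noncomm_ring
  have hsw : ∀ (a b : Fin 3) (p q : ℕ), y b ^ q * y a ^ p = y a ^ p * y b ^ q :=
    fun a b p q => ((hycentral b (y a ^ p)).pow_left q).eq
  have hperm : (∑ σ : Equiv.Perm (Fin 3), (Equiv.Perm.sign σ : ℤ) •
        (y (σ 0) ^ ℓ ^ k * y (σ 1) ^ ℓ ^ j * y (σ 2) ^ ℓ ^ i)) =
      y 0 ^ ℓ ^ k * (y 1 ^ ℓ ^ j * y 2 ^ ℓ ^ i) - y 0 ^ ℓ ^ k * (y 1 ^ ℓ ^ i * y 2 ^ ℓ ^ j)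
      - y 0 ^ ℓ ^ j * (y 1 ^ ℓ ^ k * y 2 ^ ℓ ^ i) + y 0 ^ ℓ ^ i * (y 1 ^ ℓ ^ k * y 2 ^ ℓ ^ j)
      + y 0 ^ ℓ ^ j * (y 1 ^ ℓ ^ i * y 2 ^ ℓ ^ k) - y 0 ^ ℓ ^ i * (y 1 ^ ℓ ^ j * y 2 ^ ℓ ^ k) := by
    rw [show (Finset.univ : Finset (Equiv.Perm (Fin 3))) =
      {1, Equiv.swap 0 1, Equiv.swap 0 2, Equiv.swap 1 2,
       Equiv.swap 0 1 * Equiv.swap 1 2, Equiv.swap 0 2 * Equiv.swap 1 2} from by decide]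
    rw [Finset.sum_insert (by decide), Finset.sum_insert (by decide), Finset.sum_insert (by decide),
        Finset.sum_insert (by decide), Finset.sum_insert (by decide), Finset.sum_singleton]
    simp only [
      show ∀ m : Fin 3, (1 : Equiv.Perm (Fin 3)) m = m from fun m => rfl,
      show (Equiv.swap 0 1 : Equiv.Perm (Fin 3)) 0 = 1 from by decide,
      show (Equiv.swap 0 1 : Equiv.Perm (Fin 3)) 1 = 0 from by decide,
      show (Equiv.swap 0 1 : Equiv.Perm (Fin 3)) 2 = 2 from by decide,
      show (Equiv.swap 0 2 : Equiv.Perm (Fin 3)) 0 = 2 from by decide,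
      show (Equiv.swap 0 2 : Equiv.Perm (Fin 3)) 1 = 1 from by decide,
      show (Equiv.swap 0 2 : Equiv.Perm (Fin 3)) 2 = 0 from by decide,
      show (Equiv.swap 1 2 : Equiv.Perm (Fin 3)) 0 = 0 from by decide,
      show (Equiv.swap 1 2 : Equiv.Perm (Fin 3)) 1 = 2 from by decide,
      show (Equiv.swap 1 2 : Equiv.Perm (Fin 3)) 2 = 1 from by decide,
      show ((Equiv.swap 0 1 * Equiv.swap 1 2 : Equiv.Perm (Fin 3))) 0 = 1 from by decide,
      show ((Equiv.swap 0 1 * Equiv.swap 1 2 : Equiv.Perm (Fin 3))) 1 = 2 from by decide,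
      show ((Equiv.swap 0 1 * Equiv.swap 1 2 : Equiv.Perm (Fin 3))) 2 = 0 from by decide,
      show ((Equiv.swap 0 2 * Equiv.swap 1 2 : Equiv.Perm (Fin 3))) 0 = 2 from by decide,
      show ((Equiv.swap 0 2 * Equiv.swap 1 2 : Equiv.Perm (Fin 3))) 1 = 0 from by decide,
      show ((Equiv.swap 0 2 * Equiv.swap 1 2 : Equiv.Perm (Fin 3))) 2 = 1 from by decide,
      show ((Equiv.Perm.sign (1 : Equiv.Perm (Fin 3)) : ℤˣ) : ℤ) = 1 from by decide,
      show ((Equiv.Perm.sign (Equiv.swap 0 1 : Equiv.Perm (Fin 3)) : ℤˣ) : ℤ) = -1 from by decide,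
      show ((Equiv.Perm.sign (Equiv.swap 0 2 : Equiv.Perm (Fin 3)) : ℤˣ) : ℤ) = -1 from by decide,
      show ((Equiv.Perm.sign (Equiv.swap 1 2 : Equiv.Perm (Fin 3)) : ℤˣ) : ℤ) = -1 from by decide,
      show ((Equiv.Perm.sign (Equiv.swap 0 1 * Equiv.swap 1 2 : Equiv.Perm (Fin 3)) : ℤˣ) : ℤ) = 1 from by decide,
      show ((Equiv.Perm.sign (Equiv.swap 0 2 * Equiv.swap 1 2 : Equiv.Perm (Fin 3)) : ℤˣ) : ℤ) = 1 from by decide,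
      one_smul, neg_smul]
    rw [show y 1 ^ ℓ ^ k * y 0 ^ ℓ ^ j * y 2 ^ ℓ ^ i = y 0 ^ ℓ ^ j * (y 1 ^ ℓ ^ k * y 2 ^ ℓ ^ i) from by
        rw [hsw 0 1]; exact mul_assoc _ _ _,
      show y 2 ^ ℓ ^ k * y 1 ^ ℓ ^ j * y 0 ^ ℓ ^ i = y 0 ^ ℓ ^ i * (y 1 ^ ℓ ^ j * y 2 ^ ℓ ^ k) from by
        calc y 2 ^ ℓ ^ k * y 1 ^ ℓ ^ j * y 0 ^ ℓ ^ i
            = y 1 ^ ℓ ^ j * y 2 ^ ℓ ^ k * y 0 ^ ℓ ^ i := by rw [hsw 1 2]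
          _ = y 1 ^ ℓ ^ j * (y 2 ^ ℓ ^ k * y 0 ^ ℓ ^ i) := mul_assoc _ _ _
          _ = y 1 ^ ℓ ^ j * (y 0 ^ ℓ ^ i * y 2 ^ ℓ ^ k) := by rw [hsw 0 2]
          _ = y 1 ^ ℓ ^ j * y 0 ^ ℓ ^ i * y 2 ^ ℓ ^ k := (mul_assoc _ _ _).symm
          _ = y 0 ^ ℓ ^ i * y 1 ^ ℓ ^ j * y 2 ^ ℓ ^ k := by rw [hsw 0 1]
          _ = y 0 ^ ℓ ^ i * (y 1 ^ ℓ ^ j * y 2 ^ ℓ ^ k) := mul_assoc _ _ _,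
      show y 0 ^ ℓ ^ k * y 2 ^ ℓ ^ j * y 1 ^ ℓ ^ i = y 0 ^ ℓ ^ k * (y 1 ^ ℓ ^ i * y 2 ^ ℓ ^ j) from by
        rw [mul_assoc, hsw 1 2],
      show y 1 ^ ℓ ^ k * y 2 ^ ℓ ^ j * y 0 ^ ℓ ^ i = y 0 ^ ℓ ^ i * (y 1 ^ ℓ ^ k * y 2 ^ ℓ ^ j) from by
        calc y 1 ^ ℓ ^ k * y 2 ^ ℓ ^ j * y 0 ^ ℓ ^ i
            = y 1 ^ ℓ ^ k * (y 2 ^ ℓ ^ j * y 0 ^ ℓ ^ i) := mul_assoc _ _ _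
          _ = y 1 ^ ℓ ^ k * (y 0 ^ ℓ ^ i * y 2 ^ ℓ ^ j) := by rw [hsw 0 2]
          _ = y 1 ^ ℓ ^ k * y 0 ^ ℓ ^ i * y 2 ^ ℓ ^ j := (mul_assoc _ _ _).symm
          _ = y 0 ^ ℓ ^ i * y 1 ^ ℓ ^ k * y 2 ^ ℓ ^ j := by rw [hsw 0 1]
          _ = y 0 ^ ℓ ^ i * (y 1 ^ ℓ ^ k * y 2 ^ ℓ ^ j) := mul_assoc _ _ _,
      show y 2 ^ ℓ ^ k * y 0 ^ ℓ ^ j * y 1 ^ ℓ ^ i = y 0 ^ ℓ ^ j * (y 1 ^ ℓ ^ i * y 2 ^ ℓ ^ k) from by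
        rw [hsw 0 2, mul_assoc, hsw 1 2],
      mul_assoc (y 0 ^ ℓ ^ k) (y 1 ^ ℓ ^ j) (y 2 ^ ℓ ^ i)]
    noncomm_ring
  have h1 : ℓ ^ i < ℓ ^ j := Nat.pow_lt_pow_right hℓ.one_lt hij
  have h2 : ℓ ^ j < ℓ ^ k := Nat.pow_lt_pow_right hℓ.one_lt hjk
  have h3 : ℓ ^ i < ℓ ^ k := h1.trans h2
  haveI : Fact ℓ.Prime := ⟨hℓ⟩
  set D : ℕ → ℕ → ℕ → (Fin 3 →₀ ℕ) := fun a b c => Finsupp.equivFunOnFinite.symm ![a, b, c]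
    with hDdef
  have hD0 : ∀ a b c : ℕ, D a b c 0 = a := fun a b c => rfl
  have hD1 : ∀ a b c : ℕ, D a b c 1 = b := fun a b c => rfl
  have hD2 : ∀ a b c : ℕ, D a b c 2 = c := fun a b c => rfl
  have hDne : ∀ {a b c a' b' c' : ℕ}, D a b c = D a' b' c' → a = a' ∧ b = b' ∧ c = c' := by
    intro a b c a' b' c' h
    exact ⟨by rw [← hD0 a b c, ← hD0 a' b' c', h], by rw [← hD1 a b c, ← hD1 a' b' c', h],
      by rw [← hD2 a b c, ← hD2 a' b' c', h]⟩
  have key : (y 0 ^ ℓ ^ k * (y 1 ^ ℓ ^ j * y 2 ^ ℓ ^ i) - y 0 ^ ℓ ^ k * (y 1 ^ ℓ ^ i * y 2 ^ ℓ ^ j)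
      - y 0 ^ ℓ ^ j * (y 1 ^ ℓ ^ k * y 2 ^ ℓ ^ i) + y 0 ^ ℓ ^ i * (y 1 ^ ℓ ^ k * y 2 ^ ℓ ^ j)
      + y 0 ^ ℓ ^ j * (y 1 ^ ℓ ^ i * y 2 ^ ℓ ^ k) - y 0 ^ ℓ ^ i * (y 1 ^ ℓ ^ j * y 2 ^ ℓ ^ k)) ≠ 0 := by
    intro h0
    set c : (Fin 3 →₀ ℕ) → ZMod ℓ := fun d =>
      if d = D (ℓ^k) (ℓ^i) (ℓ^j) ∨ d = D (ℓ^j) (ℓ^k) (ℓ^i) ∨ d = D (ℓ^i) (ℓ^j) (ℓ^k)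
      then -1 else 1 with hc
    have heq : (∑ d ∈ ({D (ℓ^k) (ℓ^j) (ℓ^i), D (ℓ^k) (ℓ^i) (ℓ^j), D (ℓ^j) (ℓ^k) (ℓ^i),
        D (ℓ^i) (ℓ^k) (ℓ^j), D (ℓ^j) (ℓ^i) (ℓ^k), D (ℓ^i) (ℓ^j) (ℓ^k)} : Finset (Fin 3 →₀ ℕ)),
        c d • (y 0 ^ d 0 * y 1 ^ d 1 * y 2 ^ d 2)) = 0 := by
      rw [Finset.sum_insert (by
            simp only [Finset.mem_insert, Finset.mem_singleton]
            rintro (h|h|h|h|h) <;> (obtain ⟨e1,e2,e3⟩ := hDne h; omega)),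
          Finset.sum_insert (by
            simp only [Finset.mem_insert, Finset.mem_singleton]
            rintro (h|h|h|h) <;> (obtain ⟨e1,e2,e3⟩ := hDne h; omega)),
          Finset.sum_insert (by
            simp only [Finset.mem_insert, Finset.mem_singleton]
            rintro (h|h|h) <;> (obtain ⟨e1,e2,e3⟩ := hDne h; omega)),
          Finset.sum_insert (by
            simp only [Finset.mem_insert, Finset.mem_singleton]
            rintro (h|h) <;> (obtain ⟨e1,e2,e3⟩ := hDne h; omega)),
          Finset.sum_insert (by
            simp only [Finset.mem_singleton]
            intro h; obtain ⟨e1,e2,e3⟩ := hDne h; omega),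
          Finset.sum_singleton]
      have c1 : c (D (ℓ^k) (ℓ^j) (ℓ^i)) = 1 := by
        rw [hc]; exact if_neg (by rintro (h|h|h) <;> (obtain ⟨e1,e2,e3⟩ := hDne h; omega))
      have c2 : c (D (ℓ^k) (ℓ^i) (ℓ^j)) = -1 := by rw [hc]; exact if_pos (Or.inl rfl)
      have c3 : c (D (ℓ^j) (ℓ^k) (ℓ^i)) = -1 := by rw [hc]; exact if_pos (Or.inr (Or.inl rfl))
      have c4 : c (D (ℓ^i) (ℓ^k) (ℓ^j)) = 1 := by
        rw [hc]; exact if_neg (by rintro (h|h|h) <;> (obtain ⟨e1,e2,e3⟩ := hDne h; omega))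
      have c5 : c (D (ℓ^j) (ℓ^i) (ℓ^k)) = 1 := by
        rw [hc]; exact if_neg (by rintro (h|h|h) <;> (obtain ⟨e1,e2,e3⟩ := hDne h; omega))
      have c6 : c (D (ℓ^i) (ℓ^j) (ℓ^k)) = -1 := by rw [hc]; exact if_pos (Or.inr (Or.inr rfl))
      rw [c1, c2, c3, c4, c5, c6]
      simp only [hD0, hD1, hD2, one_smul, neg_smul]
      rw [← h0]
      noncomm_ring
    have hz := hfree _ c heq (D (ℓ^k) (ℓ^j) (ℓ^i)) (Finset.mem_insert_self _ _)
    have c1 : c (D (ℓ^k) (ℓ^j) (ℓ^i)) = 1 := by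
      rw [hc]; exact if_neg (by rintro (h|h|h) <;> (obtain ⟨e1,e2,e3⟩ := hDne h; omega))
    rw [c1] at hz
    exact one_ne_zero hz
  exact ⟨hmain.trans hperm.symm, by rw [hmain]; exact key⟩
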